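/- arXiv:1403.1454 — 4 statements merged into one kernel-verified Lean document; each statement's English description precedes it below -/
import Mathlib

section
/- Let V be a finite-dimensional real inner product space, let U ⊆ V be an open set invariant under multiplication by nonzero real scalars and containing a nonzero point, and let f : V → ℂ be a finite exponential-polynomial, f(X) = Σ_{i=1}^m q_i(X) e^{⟨X, λ_i⟩} with q_i polynomials and λ_i ∈ V_ℂ* distinct. If f(X) → 0 as |X| → ∞ with X ∈ U, then f is identically zero. -/
/-!
Restricted to a line `t ↦ t • v` with `v ∈ U \ {0}`, `f` becomes a one-variable exponential
polynomial `g t = ∑ c, P c t * exp (c * t)` (distinct `c`) that tends to `0` as `|t| → ∞`.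
For a generic `t₀`, the operator `g ↦ g (· + t₀) - exp (c₀ * t₀) * g` preserves this decay, does
not raise the degree of any `P c` and lowers that of `P c₀`; it kills `g` only if
`g t = a * exp (c₀ * t)`, which decays at both ends only if `a = 0`. By induction on the vector of
degrees all `P c` vanish, so `f` vanishes on the open set `U \ {0}`, hence everywhere, being
real-analytic.
-/

open scoped BigOperators

/-- A function `p : V → ℂ` is a polynomial function if it lies in the `ℂ`-subalgebra of
functions generated by the real-linear maps `V → ℂ`. -/
def IsPolyFun {V : Type*} [AddCommGroup V] [Module ℝ V] (p : V → ℂ) : Prop :=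
  p ∈ Algebra.adjoin ℂ {q : V → ℂ | IsLinearMap ℝ q}

open Polynomial Filter Bornology Complex Finset Topology

namespace Polynomial

variable {R : Type*} [CommRing R]

theorem degree_taylor_sub_lt (r : R) {p : R[X]} (hp : p ≠ 0) :
    (taylor r p - p).degree < p.degree :=
  degree_taylor p r ▸
    degree_sub_lt_left (degree_taylor p r) ((taylor_eq_zero r p).not.2 hp) (leadingCoeff_taylor r p)

theorem eq_zero_of_C_mul_taylor_eq_C_mul [NoZeroDivisors R] {a b r : R} (hab : a ≠ b) {p : R[X]}
    (h : C a * taylor r p = C b * p) : p = 0 := by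
  by_contra hp
  have hlc := congrArg leadingCoeff h
  rw [leadingCoeff_mul, leadingCoeff_mul, leadingCoeff_C, leadingCoeff_C, leadingCoeff_taylor]
    at hlc
  exact hab (mul_right_cancel₀ (leadingCoeff_ne_zero.2 hp) hlc)

theorem eq_C_eval_zero_of_taylor_eq_self [IsDomain R] [CharZero R] {r : R} (hr : r ≠ 0) {p : R[X]}
    (h : taylor r p = p) : p = C (p.eval 0) := by
  have hperiodic : ∀ n : ℕ, p.eval (n * r) = p.eval 0 := by
    intro n
    induction n with
    | zero => simp
    | succ n ih => rw [Nat.cast_succ, add_one_mul, ← taylor_eval, h, ih]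
  refine sub_eq_zero.1 (eq_zero_of_infinite_isRoot _ ?_)
  refine Set.infinite_of_injective_forall_mem (f := fun n : ℕ => n * r)
    (fun m n hmn => by simpa [hr] using hmn) fun n => ?_
  simp [hperiodic]

end Polynomial

theorem countable_setOf_cexp_mul_eq {a b : ℂ} (hab : a ≠ b) :
    {t : ℝ | exp (a * t) = exp (b * t)}.Countable := by
  have hinj : Function.Injective fun t : ℝ => (a - b) * t :=
    (mul_right_injective₀ (sub_ne_zero.2 hab)).comp ofReal_injective
  refine ((Set.countable_range fun n : ℤ => n * (2 * Real.pi * I)).preimage hinj).mono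
    fun t ht => ?_
  rw [Set.mem_ofPred_eq, exp_eq_exp_iff_exp_sub_eq_one, ← sub_mul, exp_eq_one_iff] at ht
  obtain ⟨n, hn⟩ := ht
  exact ⟨n, hn.symm⟩

theorem exists_ne_zero_forall_cexp_mul_ne (s : Finset ℂ) (c₀ : ℂ) :
    ∃ t : ℝ, t ≠ 0 ∧ ∀ c ∈ s, c ≠ c₀ → exp (c * t) ≠ exp (c₀ * t) := by
  have hbad : (insert 0 (⋃ c ∈ s.erase c₀, {t : ℝ | exp (c * t) = exp (c₀ * t)})).Countable :=
    ((s.erase c₀).countable_toSet.biUnion fun c hc =>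
      countable_setOf_cexp_mul_eq (Finset.ne_of_mem_erase hc)).insert 0
  obtain ⟨t, ht⟩ := (hbad.dense_compl ℝ).nonempty
  simp only [Set.mem_compl_iff, Set.mem_insert_iff, Set.mem_iUnion, Set.mem_ofPred_eq, not_or,
    not_exists] at ht
  exact ⟨t, ht.1, fun c hc hne => ht.2 c (Finset.mem_erase.2 ⟨hne, hc⟩)⟩

noncomputable def expPoly (s : Finset ℂ) (P : ℂ → ℂ[X]) (z : ℂ) : ℂ :=
  ∑ c ∈ s, (P c).eval z * exp (c * z)

theorem sum_eval_mul_cexp_eq_expPoly {ι : Type*} [Fintype ι] (c : ι → ℂ) (P : ι → ℂ[X]) (z : ℂ) :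
    ∑ i, (P i).eval z * exp (c i * z) =
      expPoly (univ.image c) (fun a => ∑ i with c i = a, P i) z := by
  rw [expPoly, ← sum_fiberwise_of_maps_to fun i _ => mem_image_of_mem c (mem_univ i)]
  refine sum_congr rfl fun a _ => ?_
  rw [eval_finsetSum, sum_mul]
  exact sum_congr rfl fun i hi => by rw [(mem_filter.1 hi).2]

noncomputable def expPolyShift (w c₀ : ℂ) (P : ℂ → ℂ[X]) (c : ℂ) : ℂ[X] :=
  C (exp (c * w)) * taylor w (P c) - C (exp (c₀ * w)) * P c

theorem expPoly_expPolyShift (s : Finset ℂ) (w c₀ : ℂ) (P : ℂ → ℂ[X]) (z : ℂ) :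
    expPoly s (expPolyShift w c₀ P) z = expPoly s P (z + w) - exp (c₀ * w) * expPoly s P z := by
  simp only [expPoly, expPolyShift, mul_sum, ← sum_sub_distrib, eval_sub, eval_mul, eval_C,
    taylor_eval, mul_add, exp_add]
  exact sum_congr rfl fun c _ => by ring

theorem expPolyShift_self (w c₀ : ℂ) (P : ℂ → ℂ[X]) :
    expPolyShift w c₀ P c₀ = C (exp (c₀ * w)) * (taylor w (P c₀) - P c₀) :=
  (mul_sub _ _ _).symm

theorem degree_expPolyShift_le (w c₀ : ℂ) (P : ℂ → ℂ[X]) (c : ℂ) :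
    (expPolyShift w c₀ P c).degree ≤ (P c).degree :=
  (degree_sub_le _ _).trans <| by
    rw [degree_C_mul (exp_ne_zero _), degree_C_mul (exp_ne_zero _), degree_taylor, max_self]

theorem degree_expPolyShift_self_lt (w c₀ : ℂ) {P : ℂ → ℂ[X]} (hP : P c₀ ≠ 0) :
    (expPolyShift w c₀ P c₀).degree < (P c₀).degree := by
  rw [expPolyShift_self, degree_C_mul (exp_ne_zero _)]
  exact degree_taylor_sub_lt w hP

theorem eq_zero_of_tendsto_mul_cexp {a c : ℂ}
    (h : Tendsto (fun t : ℝ => a * exp (c * t)) (cobounded ℝ) (𝓝 0)) : a = 0 := by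
  -- `(a e^{ct}) (a e^{-ct}) = a²`
  have hsq : Tendsto (fun _ : ℝ => a ^ 2) (cobounded ℝ) (𝓝 0) := by
    have hprod := h.mul (h.comp tendsto_neg_cobounded)
    rw [mul_zero] at hprod
    refine hprod.congr fun t => ?_
    simp only [Function.comp_apply, ofReal_neg, mul_neg]
    rw [mul_mul_mul_comm, ← exp_add, add_neg_cancel, exp_zero, mul_one, sq]
  exact pow_eq_zero_iff two_ne_zero |>.1 (tendsto_const_nhds_iff.1 hsq)

theorem eq_zero_of_tendsto_expPoly (s : Finset ℂ) (P : ℂ → ℂ[X])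
    (h : Tendsto (fun t : ℝ => expPoly s P t) (cobounded ℝ) (𝓝 0)) : ∀ c ∈ s, P c = 0 := by
  induction hd : (fun c : s => (P c).degree) using WellFoundedLT.induction generalizing P with
  | ind d ih =>
    subst hd
    by_contra! ⟨c₀, hc₀s, hc₀⟩
    obtain ⟨t₀, ht₀, hgood⟩ := exists_ne_zero_forall_cexp_mul_ne s c₀
    set Q := expPolyShift t₀ c₀ P
    have hQ : ∀ c ∈ s, Q c = 0 := by
      refine ih _ ?_ Q ?_ rfl
      · exact Pi.lt_def.2 ⟨fun c => degree_expPolyShift_le _ _ _ _,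
          ⟨c₀, hc₀s⟩, degree_expPolyShift_self_lt _ _ hc₀⟩
      · have hshift :=
          (h.comp (tendsto_add_const_cobounded (t₀ : ℝ))).sub (h.const_mul (exp (c₀ * t₀)))
        simp only [sub_zero, mul_zero] at hshift
        refine hshift.congr fun t => ?_
        simp only [Q, expPoly_expPolyShift, Function.comp_apply, ofReal_add]
    have hP : ∀ c ∈ s, c ≠ c₀ → P c = 0 := fun c hc hne =>
      eq_zero_of_C_mul_taylor_eq_C_mul (hgood c hc hne) (sub_eq_zero.1 (hQ c hc))
    have hPc₀ : P c₀ = C ((P c₀).eval 0) := by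
      refine eq_C_eval_zero_of_taylor_eq_self (ofReal_ne_zero.2 ht₀) (sub_eq_zero.1 ?_)
      simpa [Q, expPolyShift_self, exp_ne_zero] using hQ c₀ hc₀s
    refine hc₀ (hPc₀.trans (C_eq_zero.2 (eq_zero_of_tendsto_mul_cexp (c := c₀) <|
      h.congr fun t => ?_)))
    rw [expPoly, sum_eq_single_of_mem c₀ hc₀s fun c hc hne => by simp [hP c hc hne]]
    rw [hPc₀, eval_C, eval_C]

section

variable {V : Type*}

theorem IsPolyFun.exists_eval_eq_apply_smul [AddCommGroup V] [Module ℝ V] {p : V → ℂ}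
    (hp : IsPolyFun p) (v : V) : ∃ P : ℂ[X], ∀ t : ℝ, p (t • v) = P.eval (t : ℂ) := by
  refine Algebra.adjoin_induction (p := fun p _ => ∃ P : ℂ[X], ∀ t : ℝ, p (t • v) = P.eval ↑t)
    ?_ ?_ ?_ ?_ hp
  · rintro g hg
    refine ⟨C (g v) * X, fun t => ?_⟩
    rw [hg.map_smul, real_smul, eval_mul, eval_C, eval_X, mul_comm]
  · exact fun a => ⟨C a, fun t => by simp⟩
  · rintro _ _ _ _ ⟨P, hP⟩ ⟨Q, hQ⟩
    exact ⟨P + Q, fun t => by simp [hP, hQ]⟩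
  · rintro _ _ _ _ ⟨P, hP⟩ ⟨Q, hQ⟩
    exact ⟨P * Q, fun t => by simp [hP, hQ]⟩

theorem exists_expPoly_eq_sum_apply_smul [AddCommGroup V] [Module ℝ V] {ι : Type*} [Fintype ι]
    {q : ι → V → ℂ} (hq : ∀ i, IsPolyFun (q i)) (lam : ι → V →ₗ[ℝ] ℂ) (v : V) :
    ∃ s P, ∀ t : ℝ, ∑ i, q i (t • v) * exp (lam i (t • v)) = expPoly s P t := by
  choose Q hQ using fun i => (hq i).exists_eval_eq_apply_smul v
  refine ⟨_, _, fun t => Eq.trans ?_ (sum_eval_mul_cexp_eq_expPoly (fun i => lam i v) Q t)⟩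
  simp [hQ, real_smul, mul_comm (t : ℂ)]

variable [NormedAddCommGroup V] [NormedSpace ℝ V]

theorem IsPolyFun.analyticOnNhd [FiniteDimensional ℝ V] {p : V → ℂ} (hp : IsPolyFun p) :
    AnalyticOnNhd ℝ p Set.univ := by
  refine Algebra.adjoin_induction (p := fun p _ => AnalyticOnNhd ℝ p Set.univ) ?_
    (fun _ _ _ => analyticAt_const) (fun _ _ _ _ => .add) (fun _ _ _ _ => .mul) hp
  rintro g hg
  exact (LinearMap.toContinuousLinearMap (IsLinearMap.mk' g hg)).analyticOnNhd _

theorem analyticOnNhd_cexp_comp_linearMap [FiniteDimensional ℝ V] (L : V →ₗ[ℝ] ℂ) :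
    AnalyticOnNhd ℝ (fun x => exp (L x)) Set.univ := fun x _ =>
  analyticAt_cexp.restrictScalars.comp (L.toContinuousLinearMap.analyticAt x)

theorem tendsto_smul_const_cobounded_inf_principal {U : Set V}
    (hU : ∀ c : ℝ, c ≠ 0 → ∀ x ∈ U, c • x ∈ U) {v : V} (hvU : v ∈ U) (hv : v ≠ 0) :
    Tendsto (fun t : ℝ => t • v) (cobounded ℝ) (cobounded V ⊓ 𝓟 U) := by
  refine tendsto_inf.2 ⟨tendsto_norm_atTop_iff_cobounded.1 ?_,
    tendsto_principal.2 ((eventually_ne_cobounded 0).mono fun t ht => hU t ht v hvU)⟩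
  simp only [norm_smul]
  exact tendsto_norm_cobounded_atTop.atTop_mul_const (norm_pos_iff.2 hv)

end

theorem exp_polynomial_tendsto_zero_on_cone_eq_zero_general
    {V : Type*} [NormedAddCommGroup V] [InnerProductSpace ℝ V] [FiniteDimensional ℝ V]
    (U : Set V) (hUopen : IsOpen U)
    (hUcone : ∀ c : ℝ, c ≠ 0 → ∀ x ∈ U, c • x ∈ U)
    (hUne : ∃ x ∈ U, x ≠ 0)
    (m : ℕ) (q : Fin m → V → ℂ) (hq : ∀ i, IsPolyFun (q i))
    (lam : Fin m → (V →ₗ[ℝ] ℂ))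
    (f : V → ℂ)
    (hf : ∀ X, f X = ∑ i, q i X * Complex.exp (lam i X))
    (hlim : ∀ ε : ℝ, 0 < ε → ∃ R : ℝ, ∀ X ∈ U, R < ‖X‖ → ‖f X‖ < ε) :
    ∀ X, f X = 0 := by
  have hfU : Tendsto f (cobounded V ⊓ 𝓟 U) (𝓝 0) := by
    refine (hasBasis_cobounded_norm.inf_principal U).tendsto_iff Metric.nhds_basis_ball |>.2
      fun ε hε => ?_
    obtain ⟨R, hR⟩ := hlim ε hε
    exact ⟨R + 1, trivial, fun X ⟨hX, hXU⟩ => by simpa using hR X hXU ((lt_add_one R).trans_le hX)⟩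
  have hvanish : ∀ v ∈ U, v ≠ 0 → f v = 0 := by
    intro v hvU hv
    obtain ⟨s, P, hsP⟩ := exists_expPoly_eq_sum_apply_smul hq lam v
    have hline : ∀ t : ℝ, f (t • v) = expPoly s P t := fun t => (hf _).trans (hsP t)
    have hP := eq_zero_of_tendsto_expPoly s P <|
      (hfU.comp (tendsto_smul_const_cobounded_inf_principal hUcone hvU hv)).congr fun t => hline t
    rw [← one_smul ℝ v, hline, expPoly]
    exact sum_eq_zero fun c hc => by simp [hP c hc]
  have hf_an : AnalyticOnNhd ℝ f Set.univ := by
    rw [show f = _ from funext hf]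
    exact Finset.analyticOnNhd_fun_sum univ fun i _ =>
      (hq i).analyticOnNhd.mul (analyticOnNhd_cexp_comp_linearMap (lam i))
  obtain ⟨x, hxU, hx⟩ := hUne
  have hev : f =ᶠ[𝓝 x] 0 := eventually_of_mem ((hUopen.inter isOpen_ne).mem_nhds ⟨hxU, hx⟩)
    fun y hy => hvanish y hy.1 hy.2
  exact congrFun (hf_an.eq_of_eventuallyEq analyticOnNhd_const hev)

/-- Let `V` be a finite-dimensional real inner product space, `U ⊆ V` an open set invariant
under multiplication by nonzero real scalars containing a nonzero point, and
`f(X) = Σ_{i} q_i(X) e^{⟨X, λ_i⟩}` an exponential polynomial with the `λ_i ∈ V_ℂ*` distinct.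
If `f(X) → 0` as `|X| → ∞` with `X ∈ U`, then `f` is identically zero. -/
theorem exp_polynomial_tendsto_zero_on_cone_eq_zero
    {V : Type*} [NormedAddCommGroup V] [InnerProductSpace ℝ V] [FiniteDimensional ℝ V]
    (U : Set V) (hUopen : IsOpen U)
    (hUcone : ∀ c : ℝ, c ≠ 0 → ∀ x ∈ U, c • x ∈ U)
    (hUne : ∃ x ∈ U, x ≠ 0)
    (m : ℕ) (q : Fin m → V → ℂ) (hq : ∀ i, IsPolyFun (q i))
    (lam : Fin m → (V →ₗ[ℝ] ℂ)) (hlam : Function.Injective lam)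
    (f : V → ℂ)
    (hf : ∀ X, f X = ∑ i, q i X * Complex.exp (lam i X))
    (hlim : ∀ ε : ℝ, 0 < ε → ∃ R : ℝ, ∀ X ∈ U, R < ‖X‖ → ‖f X‖ < ε) :
    ∀ X, f X = 0 :=
  exp_polynomial_tendsto_zero_on_cone_eq_zero_general U hUopen hUcone hUne m q hq lam f hf hlim
end

section
/- Let V be a finite-dimensional complex vector space with coordinates ν = (ν_1, ..., ν_n). If φ is an entire function of Paley-Wiener type on V (i.e., entire with bounds |φ(ν)| ≤ C_N (1+|ν|)^{-N} e^{r|Re(ν)|} for all N) that vanishes on the hyperplane ν_i = 0, then there exists a Paley-Wiener function ψ on V such that φ(ν) = ν_i ψ(ν) for all ν. -/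
open scoped BigOperators

/-- The hermitian norm of the real part of `ν ∈ ℂⁿ`. -/
noncomputable def reNorm {n : ℕ} (ν : EuclideanSpace ℂ (Fin n)) : ℝ :=
  Real.sqrt (∑ j, (ν j).re ^ 2)

/-- A Paley-Wiener function of exponent `r` on `ℂⁿ`: an entire function `φ` such that for
every `N` there is `C_N` with `|φ(ν)| ≤ C_N (1+|ν|)^{-N} e^{r |Re ν|}`. -/
def IsPaleyWienerOfExp {n : ℕ} (r : ℝ) (φ : EuclideanSpace ℂ (Fin n) → ℂ) : Prop :=
  Differentiable ℂ φ ∧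
    ∀ N : ℕ, ∃ C : ℝ, ∀ ν, (1 + ‖ν‖) ^ N * ‖φ ν‖ ≤ C * Real.exp (r * reNorm ν)

/-!
Write `φ(ν) = f_ν(ν_i)`, where `f_ν(z) = φ(ν + (z - ν_i) e_i)` vanishes at `z = 0`, and take
`ψ(ν) = dslope f_ν 0 ν_i`. Away from the hyperplane `ψ = φ / ν_i` is clearly holomorphic; near it,
Cauchy's formula writes `ψ` as a circle integral of a function holomorphic in all variables, and
differentiation under the integral sign (with Cauchy estimates as domination) shows that `ψ` is
holomorphic. The maximum principle on the unit disc bounds `ψ(ν)` by the values of `φ` at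
distance at most `2` from `ν`, and those obey the Paley-Wiener bound up to the factor `3^N e^{2r}`.
-/

open Metric Set Complex Filter Topology MeasureTheory

theorem norm_fderiv_le_of_forall_mem_ball_norm_le {E F : Type*} [NormedAddCommGroup E]
    [NormedSpace ℂ E] [NormedAddCommGroup F] [NormedSpace ℂ F] {f : E → F} {c : E} {R M : ℝ}
    (hR : 0 < R) (hd : DifferentiableOn ℂ f (ball c R)) (hM : ∀ z ∈ ball c R, ‖f z‖ ≤ M) :
    ‖fderiv ℂ f c‖ ≤ 2 * M / R :=
  Complex.norm_fderiv_le_div_of_mapsTo_ball hd (fun z hz => mem_closedBall_iff_norm.2 <|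
    (norm_sub_le _ _).trans (by linarith [hM z hz, hM c (mem_ball_self hR)])) hR

theorem IsCompact.exists_thickening_forall_norm_fderiv_le {E F : Type*} [NormedAddCommGroup E]
    [NormedSpace ℂ E] [ProperSpace E] [NormedAddCommGroup F] [NormedSpace ℂ F] {f : E → F}
    {U K : Set E} (hK : IsCompact K) (hU : IsOpen U) (hKU : K ⊆ U)
    (hf : DifferentiableOn ℂ f U) :
    ∃ δ > 0, ∃ B, ∀ q ∈ thickening δ K, q ∈ U ∧ ‖fderiv ℂ f q‖ ≤ B := by
  obtain ⟨δ, hδ, hδU⟩ := hK.exists_cthickening_subset_open hU hKU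
  obtain ⟨M, hM⟩ := hK.cthickening.exists_bound_of_continuousOn (hf.continuousOn.mono hδU)
  have hball : ∀ q ∈ thickening (δ / 2) K, ball q (δ / 2) ⊆ cthickening δ K := fun q hq =>
    (ball_subset_thickening hq _).trans <| (thickening_thickening_subset _ _ _).trans <|
      (add_halves δ).symm ▸ thickening_subset_cthickening δ K
  refine ⟨δ / 2, half_pos hδ, 2 * M / (δ / 2), fun q hq => ⟨hδU (hball q hq ?_), ?_⟩⟩
  · exact mem_ball_self (half_pos hδ)
  · exact norm_fderiv_le_of_forall_mem_ball_norm_le (half_pos hδ)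
      (hf.mono ((hball q hq).trans hδU)) fun z hz => hM z (hball q hq hz)

theorem differentiableAt_circleIntegral_of_differentiableOn {P : Type*} [NormedAddCommGroup P]
    [NormedSpace ℂ P] [FiniteDimensional ℂ P] {H : P × ℂ → ℂ} {U : Set (P × ℂ)} (hU : IsOpen U)
    (hH : DifferentiableOn ℂ H U) {p₀ : P} {c : ℂ} {R : ℝ}
    (hp₀ : ∀ w ∈ sphere c |R|, (p₀, w) ∈ U) :
    DifferentiableAt ℂ (fun p => ∮ w in C(c, R), H (p, w)) p₀ := by
  borelize (P × ℂ)
  obtain ⟨δ, hδ, B, hB⟩ := ((isCompact_sphere c |R|).image (f := fun w => (p₀, w))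
    (by fun_prop)).exists_thickening_forall_norm_fderiv_le hU (by
      rintro _ ⟨w, hw, rfl⟩; exact hp₀ w hw) hH
  have hnear : ∀ p ∈ ball p₀ δ, ∀ θ, (p, circleMap c R θ) ∈ U ∧
      ‖fderiv ℂ H (p, circleMap c R θ)‖ ≤ B := fun p hp θ =>
    hB _ (mem_thickening_iff.2 ⟨_, ⟨_, circleMap_mem_sphere' c R θ, rfl⟩, by
      simpa [Prod.dist_eq] using hp⟩)
  have hcont : ∀ p ∈ ball p₀ δ,
      Continuous fun θ => deriv (circleMap c R) θ • H (p, circleMap c R θ) := by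
    intro p hp
    simp only [deriv_circleMap]
    exact ((continuous_circleMap 0 R).mul continuous_const).smul
      (hH.continuousOn.comp_continuous (by fun_prop) fun θ => (hnear p hp θ).1)
  let F' : P → ℝ → P →L[ℂ] ℂ := fun p θ =>
    deriv (circleMap c R) θ • (fderiv ℂ H (p, circleMap c R θ)).comp (.inl ℂ P ℂ)
  refine (intervalIntegral.hasFDerivAt_integral_of_dominated_of_fderiv_le (F' := F')
    (bound := fun _ => |R| * B) (ball_mem_nhds p₀ hδ) ?_ ?_ ?_ ?_
    intervalIntegrable_const ?_).differentiableAt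
  · filter_upwards [ball_mem_nhds p₀ hδ] with p hp
    exact (hcont p hp).aestronglyMeasurable
  · exact (hcont p₀ (mem_ball_self hδ)).intervalIntegrable _ _
  · have hmeas : Measurable fun θ => (fderiv ℂ H (p₀, circleMap c R θ)).comp (.inl ℂ P ℂ) :=
      ((ContinuousLinearMap.compL ℂ P (P × ℂ) ℂ).flip (.inl ℂ P ℂ)).continuous.measurable.comp
        ((measurable_fderiv ℂ H).comp (by fun_prop))
    simp only [F', deriv_circleMap]
    exact ((continuous_circleMap 0 R).mul continuous_const).aestronglyMeasurable.smul
      hmeas.aestronglyMeasurable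
  · refine ae_of_all _ fun θ _ p hp => ?_
    calc ‖F' p θ‖ ≤ ‖deriv (circleMap c R) θ‖ *
          (‖fderiv ℂ H (p, circleMap c R θ)‖ * ‖ContinuousLinearMap.inl ℂ P ℂ‖) := by
          rw [norm_smul]; gcongr; exact ContinuousLinearMap.opNorm_comp_le _ _
      _ ≤ |R| * (B * 1) := by
          rw [deriv_circleMap, norm_mul, norm_circleMap_zero, norm_I, mul_one]
          have hB0 : 0 ≤ B := (norm_nonneg _).trans (hnear p hp θ).2
          gcongr
          exacts [(hnear p hp θ).2, ContinuousLinearMap.norm_inl_le_one ℂ P ℂ]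
      _ = |R| * B := by rw [mul_one]
  · refine ae_of_all _ fun θ _ p hp => ?_
    exact ((hH.differentiableAt (hU.mem_nhds (hnear p hp θ).1)).hasFDerivAt.comp p
      (hasFDerivAt_prodMk_left p _)).const_smul (deriv (circleMap c R) θ)

theorem differentiable_dslope {F : Type*} [NormedAddCommGroup F] [NormedSpace ℂ F] [CompleteSpace F]
    {g : ℂ → F} (hg : Differentiable ℂ g) (a : ℂ) : Differentiable ℂ (dslope g a) :=
  differentiableOn_univ.1 ((differentiableOn_dslope univ_mem).2 hg.differentiableOn)

theorem differentiable_uncurry_dslope {E : Type*} [NormedAddCommGroup E] [NormedSpace ℂ E]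
    [FiniteDimensional ℂ E] {f : E → ℂ → ℂ} (hf : Differentiable ℂ (Function.uncurry f))
    (c : ℂ) : Differentiable ℂ (Function.uncurry fun x => dslope (f x) c) := by
  have hfc : Differentiable ℂ fun p : E × ℂ => f p.1 c :=
    hf.comp (differentiable_fst.prodMk (differentiable_const c))
  rintro ⟨x₀, z₀⟩
  rcases ne_or_eq z₀ c with hz₀ | hz₀
  · have hslope : (Function.uncurry fun x => dslope (f x) c) =ᶠ[𝓝 (x₀, z₀)]
        fun p => (p.2 - c)⁻¹ • (f p.1 p.2 - f p.1 c) := by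
      filter_upwards [continuous_snd.continuousAt.eventually_ne hz₀] with p hp
      exact (dslope_of_ne _ hp).trans (slope_def_module _ _ _)
    refine DifferentiableAt.congr_of_eventuallyEq ?_ hslope
    exact ((differentiableAt_snd.sub_const c).inv (sub_ne_zero.2 hz₀)).smul
      ((hf _).sub (hfc _))
  · rw [hz₀]
    let H : (E × ℂ) × ℂ → ℂ := fun q => (q.2 - q.1.2)⁻¹ • dslope (f q.1.1) c q.2
    let U : Set ((E × ℂ) × ℂ) := {q | q.2 ≠ c ∧ q.2 ≠ q.1.2}
    have hU : IsOpen U := (isOpen_ne_fun (by fun_prop) (by fun_prop)).inter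
      (isOpen_ne_fun (by fun_prop) (by fun_prop))
    have hH : DifferentiableOn ℂ H U := by
      have hg : Differentiable ℂ fun q : (E × ℂ) × ℂ => f q.1.1 q.2 - f q.1.1 c :=
        (hf.comp (f := fun q : (E × ℂ) × ℂ => (q.1.1, q.2)) (by fun_prop)).sub
          (hfc.comp (f := fun q : (E × ℂ) × ℂ => q.1) (by fun_prop))
      refine DifferentiableOn.congr (f := fun q => (q.2 - q.1.2)⁻¹ • (q.2 - c)⁻¹ •
        (f q.1.1 q.2 - f q.1.1 c)) (fun q hq => DifferentiableAt.differentiableWithinAt ?_)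
        fun q hq => by simp only [H, dslope_of_ne _ hq.1, slope_def_module]
      exact ((by fun_prop : DifferentiableAt ℂ (fun q : (E × ℂ) × ℂ => q.2 - q.1.2) q).inv
        (sub_ne_zero.2 hq.2)).smul
        (((differentiableAt_snd.sub_const c).inv (sub_ne_zero.2 hq.1)).smul (hg q))
    have hcauchy : (Function.uncurry fun x => dslope (f x) c) =ᶠ[𝓝 (x₀, c)]
        fun p => (2 * Real.pi * I : ℂ)⁻¹ • ∮ w in C(c, 1), H (p, w) := by
      filter_upwards [(continuous_snd.isOpen_preimage _ isOpen_ball).mem_nhds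
        (mem_ball_self one_pos : c ∈ ball c 1)] with p hp
      exact ((differentiable_dslope (hf.comp (differentiable_const p.1 |>.prodMk
        differentiable_id)) c).diffContOnCl.two_pi_i_inv_smul_circleIntegral_sub_inv_smul hp).symm
    refine DifferentiableAt.congr_of_eventuallyEq ?_ hcauchy
    refine (differentiableAt_circleIntegral_of_differentiableOn hU hH fun w hw => ?_).const_smul
      ((2 * Real.pi * I : ℂ)⁻¹)
    have : w ≠ c := ne_of_mem_sphere hw (by norm_num)
    exact ⟨this, this⟩

theorem norm_dslope_le_of_forall_norm_sub_le {F : Type*} [NormedAddCommGroup F]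
    [NormedSpace ℂ F] [CompleteSpace F] {g : ℂ → F} (hg : Differentiable ℂ g) (a z : ℂ) {C : ℝ}
    (hC : ∀ w, ‖w - z‖ ≤ 2 → ‖g w - g a‖ ≤ C) : ‖dslope g a z‖ ≤ C := by
  rcases le_or_gt 1 ‖z - a‖ with hz | hz
  · have hza : z ≠ a := by rintro rfl; norm_num at hz
    rw [dslope_of_ne _ hza, slope_def_module, norm_smul, norm_inv]
    calc ‖z - a‖⁻¹ * ‖g z - g a‖ ≤ 1 * ‖g z - g a‖ := by
          gcongr; exact inv_le_one_of_one_le₀ hz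
      _ ≤ C := by rw [one_mul]; exact hC z (by simp)
  · refine Complex.norm_le_of_forall_mem_frontier_norm_le isBounded_ball
      (differentiable_dslope hg a).diffContOnCl ?_ (subset_closure (mem_ball_iff_norm.2 hz))
    rw [frontier_ball a one_ne_zero]
    intro w hw
    have hw1 : ‖w - a‖ = 1 := mem_sphere_iff_norm.1 hw
    have hwa : w ≠ a := by rintro rfl; simp at hw1
    rw [dslope_of_ne _ hwa, slope_def_module, norm_smul, norm_inv, hw1, inv_one, one_mul]
    refine hC w ((norm_sub_le_norm_sub_add_norm_sub w a z).trans ?_)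
    rw [norm_sub_rev a z]
    linarith

section PaleyWiener

variable {n : ℕ}

theorem reNorm_eq_norm (ν : EuclideanSpace ℂ (Fin n)) :
    reNorm ν = ‖(WithLp.toLp 2 fun j => (ν j).re : EuclideanSpace ℝ (Fin n))‖ := by
  simp [reNorm, EuclideanSpace.norm_eq]

theorem reNorm_le_add_norm_sub (μ ν : EuclideanSpace ℂ (Fin n)) :
    reNorm μ ≤ reNorm ν + ‖μ - ν‖ := by
  rw [reNorm_eq_norm, reNorm_eq_norm]
  have hsplit : (WithLp.toLp 2 fun j => (μ j).re : EuclideanSpace ℝ (Fin n)) =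
      WithLp.toLp 2 (fun j => (ν j).re) + WithLp.toLp 2 fun j => ((μ - ν) j).re := by
    ext j; simp
  have hre : ‖(WithLp.toLp 2 fun j => ((μ - ν) j).re : EuclideanSpace ℝ (Fin n))‖ ≤ ‖μ - ν‖ := by
    rw [EuclideanSpace.norm_eq, EuclideanSpace.norm_eq]
    gcongr with j
    exact abs_re_le_norm _
  rw [hsplit]
  linarith [norm_add_le (WithLp.toLp 2 fun j => (ν j).re : EuclideanSpace ℝ (Fin n))
    (WithLp.toLp 2 fun j => ((μ - ν) j).re)]

theorem one_add_norm_pow_mul_norm_le_of_norm_sub_le {r C d : ℝ} {N : ℕ}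
    {φ : EuclideanSpace ℂ (Fin n) → ℂ} (hr : 0 ≤ r)
    (hC : ∀ ν, (1 + ‖ν‖) ^ N * ‖φ ν‖ ≤ C * Real.exp (r * reNorm ν))
    {μ ν : EuclideanSpace ℂ (Fin n)} (hμν : ‖μ - ν‖ ≤ d) :
    (1 + ‖ν‖) ^ N * ‖φ μ‖ ≤ (1 + d) ^ N * Real.exp (r * d) * C * Real.exp (r * reNorm ν) := by
  have hd : 0 ≤ d := (norm_nonneg _).trans hμν
  have hC0 : 0 ≤ C := nonneg_of_mul_nonneg_left
    ((by positivity : (0 : ℝ) ≤ (1 + ‖(0 : EuclideanSpace ℂ (Fin n))‖) ^ N * ‖φ 0‖).trans (hC 0))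
    (Real.exp_pos _)
  have hweight : 1 + ‖ν‖ ≤ (1 + d) * (1 + ‖μ‖) := by
    nlinarith [norm_le_norm_add_norm_sub' ν μ, norm_sub_rev μ ν, norm_nonneg μ]
  have hexp : Real.exp (r * reNorm μ) ≤ Real.exp (r * d) * Real.exp (r * reNorm ν) := by
    rw [← Real.exp_add]
    gcongr
    nlinarith [reNorm_le_add_norm_sub μ ν]
  calc (1 + ‖ν‖) ^ N * ‖φ μ‖ ≤ (1 + d) ^ N * ((1 + ‖μ‖) ^ N * ‖φ μ‖) := by
        rw [← mul_assoc, ← mul_pow]; gcongr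
    _ ≤ (1 + d) ^ N * (C * (Real.exp (r * d) * Real.exp (r * reNorm ν))) := by
        exact mul_le_mul_of_nonneg_left ((hC μ).trans (by gcongr)) (by positivity)
    _ = (1 + d) ^ N * Real.exp (r * d) * C * Real.exp (r * reNorm ν) := by ring

end PaleyWiener

/-- A Paley-Wiener function on `ℂⁿ` vanishing on the hyperplane `ν_i = 0` is divisible by
the coordinate `ν_i` within the space of Paley-Wiener functions. -/
theorem paleyWiener_div_coordinate {n : ℕ} (r : ℝ) (hr : 0 < r) (i : Fin n)
    (φ : EuclideanSpace ℂ (Fin n) → ℂ) (hφ : IsPaleyWienerOfExp r φ)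
    (hvan : ∀ ν : EuclideanSpace ℂ (Fin n), ν i = 0 → φ ν = 0) :
    ∃ ψ : EuclideanSpace ℂ (Fin n) → ℂ,
      IsPaleyWienerOfExp r ψ ∧ ∀ ν, φ ν = ν i * ψ ν := by
  obtain ⟨hφd, hφb⟩ := hφ
  let f : EuclideanSpace ℂ (Fin n) → ℂ → ℂ := fun ν z =>
    φ (ν + (z - ν i) • EuclideanSpace.single i 1)
  have hcoord : Differentiable ℂ fun ν : EuclideanSpace ℂ (Fin n) => ν i :=
    (EuclideanSpace.proj (𝕜 := ℂ) i).differentiable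
  have hf : Differentiable ℂ (Function.uncurry f) :=
    hφd.comp (differentiable_fst.add (((differentiable_snd.sub (hcoord.comp
      differentiable_fst)).smul_const _)))
  have hfν : ∀ ν, Differentiable ℂ (f ν) := fun ν =>
    hf.comp (differentiable_const ν |>.prodMk differentiable_id)
  have hf0 : ∀ ν, f ν 0 = 0 := fun ν => hvan _ (by simp)
  refine ⟨fun ν => dslope (f ν) 0 (ν i), ⟨?_, fun N => ?_⟩, fun ν => ?_⟩
  · exact (differentiable_uncurry_dslope hf 0).comp (differentiable_id.prodMk hcoord)
  · obtain ⟨C, hC⟩ := hφb N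
    refine ⟨(1 + 2) ^ N * Real.exp (r * 2) * C, fun ν => ?_⟩
    rw [← le_div_iff₀' (by positivity)]
    refine norm_dslope_le_of_forall_norm_sub_le (hfν ν) 0 (ν i) fun w hw => ?_
    rw [hf0, sub_zero, le_div_iff₀' (by positivity)]
    exact one_add_norm_pow_mul_norm_le_of_norm_sub_le hr.le hC (by simpa [norm_smul] using hw)
  · have hfac := sub_smul_dslope (f ν) 0 (ν i)
    rwa [sub_zero, hf0, sub_zero, smul_eq_mul, eq_comm, show f ν (ν i) = φ ν by simp [f]] at hfac
end

section
/- Let E be a set, D ≥ 0 an integer, d : E → ℝ_{≥0} a function, and for each e ∈ E let V_e be a real inner product space of dimension ≤ D. Let PW^r be the space of families f = (f_e) of entire functions on V_{e,ℂ}* satisfying: for all N there is C_N with |f_e(λ)| ≤ C_N (1+d(e)+|λ|)^{-N} e^{r|Re λ|}. Let PW̲^r be the space of families satisfying (a) for all N and e there is C_N(e) with |f_e(λ)| ≤ C_N(e)(1+|λ|)^{-N} e^{r|Re λ|}, and (b) for all N there is C̲_N with |f_e(λ)| ≤ C̲_N(1+d(e)+|λ|)^{-N} for all λ ∈ iV_e*.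 Then for every ε > 0 and r > 0, PW̲^r ⊆ PW^{r+ε}; consequently the inductive limits PW and PW̲ coincide. -/
/-!
Write `ν = x + iy` with `x ≠ 0` and restrict `f_e` to the complex line `z ↦ z u + i v`
through `ν`, where `u = x/|x|` and `v ⊥ u`. On this line the real part of the point has norm
`|Re z|`, the imaginary axis is mapped into `iV_e*`, and `‖z u + i v‖² = |z|² + |v|²`. Hence the
polynomial weight `(1 + d(e) + |v| + z)^N` is comparable with `(1 + d(e) + ‖z u + i v‖)^N`:
condition (b) bounds the weighted restriction on the imaginary axis uniformly in `e`, while (a)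
with `N = 0` makes it of exponential type and `o(e^{(r+ε)s})` on the positive real axis. The
Phragmén–Lindelöf principle in the right half-plane then gives the bound `4^N C̲_N e^{(r+ε)|x|}`
at `ν`.
-/

open scoped BigOperators

/-- The family `f = (f_e)` belongs to `PW^r`: for all `N` there is a uniform `C_N` with
`|f_e(λ)| ≤ C_N (1 + d(e) + |λ|)^{-N} e^{r |Re λ|}` for all `e` and `λ`. -/
def MemPW (E : Type*) (d : E → ℝ) (dim : E → ℕ) (r : ℝ)
    (f : ∀ e : E, EuclideanSpace ℂ (Fin (dim e)) → ℂ) : Prop :=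
  ∀ N : ℕ, ∃ C : ℝ, ∀ (e : E) (ν : EuclideanSpace ℂ (Fin (dim e))),
    (1 + d e + ‖ν‖) ^ N * ‖f e ν‖ ≤ C * Real.exp (r * reNorm ν)

/-- The family `f = (f_e)` belongs to `PW̲^r`: (a) for all `N` and `e` there is `C_N(e)` with
`|f_e(λ)| ≤ C_N(e) (1+|λ|)^{-N} e^{r |Re λ|}`, and (b) for all `N` there is a uniform `C̲_N`
with `|f_e(λ)| ≤ C̲_N (1 + d(e) + |λ|)^{-N}` for all `e` and `λ ∈ iV_e*`. -/
def MemPWu (E : Type*) (d : E → ℝ) (dim : E → ℕ) (r : ℝ)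
    (f : ∀ e : E, EuclideanSpace ℂ (Fin (dim e)) → ℂ) : Prop :=
  (∀ (e : E) (N : ℕ), ∃ C : ℝ, ∀ ν : EuclideanSpace ℂ (Fin (dim e)),
      (1 + ‖ν‖) ^ N * ‖f e ν‖ ≤ C * Real.exp (r * reNorm ν)) ∧
    ∀ N : ℕ, ∃ C : ℝ, ∀ (e : E) (ν : EuclideanSpace ℂ (Fin (dim e))),
      (∀ j, (ν j).re = 0) → (1 + d e + ‖ν‖) ^ N * ‖f e ν‖ ≤ C

open Complex Filter Topology

lemma reNorm_nonneg {n : ℕ} (ν : EuclideanSpace ℂ (Fin n)) : 0 ≤ reNorm ν := Real.sqrt_nonneg _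

lemma sq_reNorm {n : ℕ} (ν : EuclideanSpace ℂ (Fin n)) : reNorm ν ^ 2 = ∑ j, (ν j).re ^ 2 :=
  Real.sq_sqrt (Finset.sum_nonneg fun _ _ => sq_nonneg _)

lemma reNorm_eq_zero_iff {n : ℕ} {ν : EuclideanSpace ℂ (Fin n)} :
    reNorm ν = 0 ↔ ∀ j, (ν j).re = 0 := by
  rw [reNorm, Real.sqrt_eq_zero (Finset.sum_nonneg fun _ _ => sq_nonneg _),
    Finset.sum_eq_zero_iff_of_nonneg fun _ _ => sq_nonneg _]
  simp

noncomputable def complexLine {n : ℕ} (u v : Fin n → ℝ) (z : ℂ) : EuclideanSpace ℂ (Fin n) :=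
  z • WithLp.toLp 2 (fun j => (u j : ℂ)) + WithLp.toLp 2 (fun j => (v j : ℂ) * I)

section complexLine

variable {n : ℕ} {u v : Fin n → ℝ}

@[simp]
lemma complexLine_apply (z : ℂ) (j : Fin n) : complexLine u v z j = z * u j + v j * I := by
  simp [complexLine]

lemma differentiable_complexLine : Differentiable ℂ (complexLine u v) :=
  (differentiable_id.smul_const _).add_const _

lemma reNorm_complexLine (hu : ∑ j, u j ^ 2 = 1) (z : ℂ) :
    reNorm (complexLine u v z) = |z.re| := by
  simp only [reNorm, complexLine_apply, add_re, mul_re, I_re, I_im, ofReal_re,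
    ofReal_im, mul_zero, sub_zero, add_zero, mul_pow, ← Finset.mul_sum, hu, mul_one,
    Real.sqrt_sq_eq_abs]

lemma re_complexLine_ofReal_mul_I (s : ℝ) (j : Fin n) : (complexLine u v (s * I) j).re = 0 := by
  simp

lemma sq_norm_complexLine (hu : ∑ j, u j ^ 2 = 1) (huv : ∑ j, u j * v j = 0) (z : ℂ) :
    ‖complexLine u v z‖ ^ 2 = ‖z‖ ^ 2 + ∑ j, v j ^ 2 := by
  have hterm : ∀ j, ‖complexLine u v z j‖ ^ 2 =
      ‖z‖ ^ 2 * u j ^ 2 + 2 * z.im * (u j * v j) + v j ^ 2 := fun j => by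
    rw [Complex.sq_norm, Complex.sq_norm, normSq_apply, normSq_apply]
    simp only [complexLine_apply, add_re, add_im, mul_re, mul_im, I_re, I_im, ofReal_re, ofReal_im]
    ring
  rw [EuclideanSpace.norm_sq_eq, Finset.sum_congr rfl fun j _ => hterm j, Finset.sum_add_distrib,
    Finset.sum_add_distrib, ← Finset.mul_sum, ← Finset.mul_sum, hu, huv]
  ring

end complexLine

lemma exists_complexLine_eq {n : ℕ} {ν : EuclideanSpace ℂ (Fin n)} (hν : 0 < reNorm ν) :
    ∃ (u v : Fin n → ℝ) (z : ℂ), ∑ j, u j ^ 2 = 1 ∧ ∑ j, u j * v j = 0 ∧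
      z.re = reNorm ν ∧ complexLine u v z = ν := by
  set t := reNorm ν
  set u : Fin n → ℝ := fun j => (ν j).re / t
  set α := ∑ j, u j * (ν j).im
  have hu : ∑ j, u j ^ 2 = 1 := by
    simp only [u, div_pow, ← Finset.sum_div, ← sq_reNorm]
    exact div_self (pow_pos hν 2).ne'
  refine ⟨u, fun j => (ν j).im - α * u j, t + α * I, hu, ?_, by simp, ?_⟩
  · simp only [mul_sub, Finset.sum_sub_distrib, mul_left_comm _ α, ← Finset.mul_sum, ← sq, hu]
    ring
  · ext j
    apply Complex.ext <;> simp [u, mul_div_cancel₀ _ hν.ne']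

lemma add_le_two_mul_norm_ofReal_add {K β q : ℝ} {z : ℂ} (hK : 0 ≤ K) (hβ : 0 ≤ β)
    (hz : 0 ≤ z.re) (hq : q ^ 2 = ‖z‖ ^ 2 + β ^ 2) : K + q ≤ 2 * ‖((K + β : ℝ) : ℂ) + z‖ := by
  have hq_le : q ≤ ‖z‖ + β :=
    (abs_le_of_sq_le_sq' (by nlinarith [norm_nonneg z]) (by positivity)).2
  have hnorm : ‖((K + β : ℝ) : ℂ) + z‖ ^ 2 = (K + β + z.re) ^ 2 + z.im ^ 2 := by
    rw [Complex.sq_norm, normSq_apply]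
    simp only [add_re, add_im, ofReal_re, ofReal_im, zero_add]
    ring
  have hz2 : ‖z‖ ^ 2 = z.re ^ 2 + z.im ^ 2 := by rw [Complex.sq_norm, normSq_apply]; ring
  refine (abs_le_of_sq_le_sq' ?_ (by positivity)).2
  nlinarith [norm_nonneg z, sq_nonneg (K + β - ‖z‖)]

lemma norm_ofReal_add_mul_I_le {K β q s : ℝ} (hK : 0 ≤ K) (hβ : 0 ≤ β) (hq0 : 0 ≤ q)
    (hq : q ^ 2 = s ^ 2 + β ^ 2) : ‖((K + β : ℝ) : ℂ) + s * I‖ ≤ 2 * (K + q) := by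
  have hβq : β ≤ q := (abs_le_of_sq_le_sq' (by nlinarith [sq_nonneg s]) hq0).2
  have hsq : |s| ≤ q := abs_le_of_sq_le_sq (by nlinarith [sq_nonneg β]) hq0
  have hnorm : ‖((K + β : ℝ) : ℂ) + s * I‖ ^ 2 = (K + β) ^ 2 + |s| ^ 2 := by
    rw [Complex.sq_norm, normSq_apply, sq_abs]
    simp only [add_re, add_im, mul_re, mul_im, ofReal_re, ofReal_im, I_re, I_im]
    ring
  refine (abs_le_of_sq_le_sq' ?_ (by positivity)).2
  nlinarith [abs_nonneg s]

theorem tendsto_add_pow_mul_exp_neg_mul_atTop (K : ℝ) (N : ℕ) {c : ℝ} (hc : 0 < c) :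
    Tendsto (fun x : ℝ => (K + x) ^ N * Real.exp (-(c * x))) atTop (𝓝 0) := by
  have h := ((tendsto_rpow_mul_exp_neg_mul_atTop_nhds_zero N c hc).comp
    (tendsto_atTop_add_const_left atTop K tendsto_id)).const_mul (Real.exp (c * K))
  rw [mul_zero] at h
  refine h.congr fun x => ?_
  simp only [Function.comp_apply, id, Real.rpow_natCast]
  rw [mul_left_comm, ← Real.exp_add]
  ring_nf

theorem norm_le_mul_exp_re_of_right_half_plane {E : Type*} [NormedAddCommGroup E]
    [NormedSpace ℂ E] {g : ℂ → E} (hg : Differentiable ℂ g) {A B M r : ℝ}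
    (hgrowth : ∀ z, ‖g z‖ ≤ A * Real.exp (B * ‖z‖))
    (hre : Tendsto (fun x : ℝ => ‖g x‖ * Real.exp (-(r * x))) atTop (𝓝 0))
    (him : ∀ s : ℝ, ‖g (s * I)‖ ≤ M) {z : ℂ} (hz : 0 ≤ z.re) :
    ‖g z‖ ≤ M * Real.exp (r * z.re) := by
  set h : ℂ → E := fun w => exp (-(r * w)) • g w
  have norm_h : ∀ w, ‖h w‖ = Real.exp (-(r * w.re)) * ‖g w‖ := fun w => by
    simp [h, norm_smul, Complex.norm_exp]
  have hh : Differentiable ℂ h := by fun_prop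
  have hbound : ‖h z‖ ≤ M := by
    refine PhragmenLindelof.right_half_plane_of_tendsto_zero_on_real hh.diffContOnCl
      ⟨1, one_lt_two, B + |r|, ?_⟩ ?_ (fun s => ?_) hz
    · refine (Asymptotics.isBigO_of_le' (c := A) _ fun w => ?_).mono inf_le_left
      have hre_le : -(r * w.re) ≤ |r| * ‖w‖ := by
        calc -(r * w.re) ≤ |r * w.re| := neg_le_abs _
          _ ≤ |r| * ‖w‖ := by rw [abs_mul]; gcongr; exact abs_re_le_norm w
      calc ‖h w‖ ≤ Real.exp (|r| * ‖w‖) * (A * Real.exp (B * ‖w‖)) := by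
            rw [norm_h]; gcongr; exact hgrowth w
        _ = A * ‖Real.exp ((B + |r|) * ‖w‖ ^ (1 : ℝ))‖ := by
            rw [Real.rpow_one, Real.norm_of_nonneg (Real.exp_pos _).le, add_mul, Real.exp_add]
            ring
    · refine tendsto_zero_iff_norm_tendsto_zero.2 (hre.congr fun x => ?_)
      rw [norm_h, ofReal_re, mul_comm]
    · simpa [norm_h] using him s
  rw [norm_h, ← le_div_iff₀' (Real.exp_pos _), div_eq_mul_inv, ← Real.exp_neg, neg_neg] at hbound
  exact hbound

theorem norm_ofReal_add_pow_mul_le_right_half_plane {G : ℂ → ℂ} (hG : Differentiable ℂ G)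
    (w : ℝ) (N : ℕ) {r ε Ca M : ℝ} (hε : 0 < ε)
    (hGa : ∀ z, ‖G z‖ ≤ Ca * Real.exp (r * |z.re|))
    (him : ∀ s : ℝ, ‖((w : ℂ) + s * I) ^ N * G (s * I)‖ ≤ M) {z : ℂ} (hz : 0 ≤ z.re) :
    ‖((w : ℂ) + z) ^ N * G z‖ ≤ M * Real.exp ((r + ε) * z.re) := by
  set g : ℂ → ℂ := fun z => ((w : ℂ) + z) ^ N * G z
  have hg : Differentiable ℂ g := by fun_prop
  have norm_g (z : ℂ) : ‖g z‖ = ‖(w : ℂ) + z‖ ^ N * ‖G z‖ := by simp [g]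
  have hw (z : ℂ) : ‖(w : ℂ) + z‖ ≤ |w| + ‖z‖ := by
    simpa only [norm_real, Real.norm_eq_abs] using norm_add_le (w : ℂ) z
  have hCa : 0 ≤ Ca := nonneg_of_mul_nonneg_left ((norm_nonneg _).trans (hGa 0)) (Real.exp_pos _)
  have hgrowth (z : ℂ) : ‖g z‖ ≤ (|w| + 1) ^ N * Ca * Real.exp ((N + |r|) * ‖z‖) := by
    have hpoly : ‖(w : ℂ) + z‖ ≤ (|w| + 1) * Real.exp ‖z‖ := by
      nlinarith [hw z, Real.add_one_le_exp ‖z‖, norm_nonneg z, abs_nonneg w]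
    have hexp : r * |z.re| ≤ |r| * ‖z‖ := by
      calc r * |z.re| ≤ |r| * |z.re| := by gcongr; exact le_abs_self r
        _ ≤ |r| * ‖z‖ := by gcongr; exact abs_re_le_norm z
    calc ‖g z‖ ≤ ((|w| + 1) * Real.exp ‖z‖) ^ N * (Ca * Real.exp (|r| * ‖z‖)) := by
          rw [norm_g]
          gcongr
          exact (hGa z).trans (by gcongr)
      _ = (|w| + 1) ^ N * Ca * Real.exp ((N + |r|) * ‖z‖) := by
          rw [mul_pow, ← Real.exp_nat_mul, add_mul, Real.exp_add]; ring
  have hdecay : Tendsto (fun s : ℝ => ‖g s‖ * Real.exp (-((r + ε) * s))) atTop (𝓝 0) := by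
    have hlim := (tendsto_add_pow_mul_exp_neg_mul_atTop |w| N hε).const_mul Ca
    rw [mul_zero] at hlim
    refine squeeze_zero' (Eventually.of_forall fun s => by positivity) ?_ hlim
    filter_upwards [eventually_ge_atTop 0] with s hs
    calc ‖g s‖ * Real.exp (-((r + ε) * s))
        ≤ (|w| + s) ^ N * (Ca * Real.exp (r * s)) * Real.exp (-((r + ε) * s)) := by
          rw [norm_g]
          gcongr
          · simpa [Real.norm_of_nonneg hs] using hw s
          · simpa [abs_of_nonneg hs] using hGa s
      _ = Ca * ((|w| + s) ^ N * Real.exp (-(ε * s))) := by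
          rw [mul_assoc, mul_assoc, ← Real.exp_add]; ring_nf
  exact norm_le_mul_exp_re_of_right_half_plane hg hgrowth hdecay him hz

section Line

variable {n : ℕ} {F : EuclideanSpace ℂ (Fin n) → ℂ} {K r ε Ca Cb : ℝ} {N : ℕ}

theorem pow_mul_norm_comp_complexLine_le (hF : Differentiable ℂ F) (hK : 0 ≤ K) (hε : 0 < ε)
    (ha : ∀ ν, ‖F ν‖ ≤ Ca * Real.exp (r * reNorm ν))
    (hb : ∀ ν : EuclideanSpace ℂ (Fin n), (∀ j, (ν j).re = 0) → (K + ‖ν‖) ^ N * ‖F ν‖ ≤ Cb)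
    {u v : Fin n → ℝ} (hu : ∑ j, u j ^ 2 = 1) (huv : ∑ j, u j * v j = 0) {z : ℂ}
    (hz : 0 ≤ z.re) :
    (K + ‖complexLine u v z‖) ^ N * ‖F (complexLine u v z)‖ ≤
      4 ^ N * Cb * Real.exp ((r + ε) * z.re) := by
  set β := Real.sqrt (∑ j, v j ^ 2)
  have hβ : 0 ≤ β := Real.sqrt_nonneg _
  have hφ (z : ℂ) : ‖complexLine u v z‖ ^ 2 = ‖z‖ ^ 2 + β ^ 2 := by
    rw [sq_norm_complexLine hu huv, Real.sq_sqrt (Finset.sum_nonneg fun _ _ => sq_nonneg _)]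
  -- `(K + β + z) ^ N` is comparable with `(K + ‖complexLine u v z‖) ^ N`: from above on the
  -- imaginary axis, from below on the right half-plane.
  have him (s : ℝ) :
      ‖((K + β : ℝ) + s * I) ^ N * F (complexLine u v (s * I))‖ ≤ 2 ^ N * Cb := by
    have hq : ‖complexLine u v (s * I)‖ ^ 2 = s ^ 2 + β ^ 2 := by simp [hφ]
    calc ‖((K + β : ℝ) + s * I) ^ N * F (complexLine u v (s * I))‖
        ≤ (2 * (K + ‖complexLine u v (s * I)‖)) ^ N * ‖F (complexLine u v (s * I))‖ := by
          rw [norm_mul, norm_pow]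
          gcongr
          exact norm_ofReal_add_mul_I_le hK hβ (norm_nonneg _) hq
      _ = 2 ^ N * ((K + ‖complexLine u v (s * I)‖) ^ N * ‖F (complexLine u v (s * I))‖) := by
          rw [mul_pow]; ring
      _ ≤ 2 ^ N * Cb := by gcongr; exact hb _ (re_complexLine_ofReal_mul_I s)
  have hFa (z : ℂ) : ‖(F ∘ complexLine u v) z‖ ≤ Ca * Real.exp (r * |z.re|) := by
    simpa only [Function.comp_apply, reNorm_complexLine hu] using ha (complexLine u v z)
  have hPL := norm_ofReal_add_pow_mul_le_right_half_plane (hF.comp differentiable_complexLine)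
    (K + β) N hε hFa him hz
  rw [Function.comp_apply, norm_mul, norm_pow] at hPL
  calc (K + ‖complexLine u v z‖) ^ N * ‖F (complexLine u v z)‖
      ≤ (2 * ‖((K + β : ℝ) : ℂ) + z‖) ^ N * ‖F (complexLine u v z)‖ := by
        gcongr; exact add_le_two_mul_norm_ofReal_add hK hβ hz (hφ z)
    _ = 2 ^ N * (‖((K + β : ℝ) : ℂ) + z‖ ^ N * ‖F (complexLine u v z)‖) := by ring
    _ ≤ 2 ^ N * (2 ^ N * Cb * Real.exp ((r + ε) * z.re)) := by gcongr
    _ = 4 ^ N * Cb * Real.exp ((r + ε) * z.re) := by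
        rw [show (4 : ℝ) = 2 * 2 by norm_num, mul_pow]; ring

theorem pow_mul_norm_le_of_bound_on_imaginary (hF : Differentiable ℂ F) (hK : 0 ≤ K)
    (hε : 0 < ε) (ha : ∀ ν, ‖F ν‖ ≤ Ca * Real.exp (r * reNorm ν))
    (hb : ∀ ν : EuclideanSpace ℂ (Fin n), (∀ j, (ν j).re = 0) → (K + ‖ν‖) ^ N * ‖F ν‖ ≤ Cb)
    (ν : EuclideanSpace ℂ (Fin n)) :
    (K + ‖ν‖) ^ N * ‖F ν‖ ≤ 4 ^ N * Cb * Real.exp ((r + ε) * reNorm ν) := by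
  rcases (reNorm_nonneg ν).eq_or_lt with hre | hre
  · have hCb : 0 ≤ Cb := le_trans (by positivity) (hb 0 fun _ => rfl)
    rw [← hre, mul_zero, Real.exp_zero, mul_one]
    exact (hb ν (reNorm_eq_zero_iff.1 hre.symm)).trans
      (le_mul_of_one_le_left hCb (one_le_pow₀ (by norm_num)))
  · obtain ⟨u, v, z, hu, huv, hz, rfl⟩ := exists_complexLine_eq hre
    rw [← hz]
    exact pow_mul_norm_comp_complexLine_le hF hK hε ha hb hu huv (hz ▸ hre.le)

end Line

theorem MemPWu.memPW {E : Type*} {d : E → ℝ} {dim : E → ℕ} {r ε : ℝ}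
    {f : ∀ e : E, EuclideanSpace ℂ (Fin (dim e)) → ℂ} (hd : ∀ e, 0 ≤ d e)
    (hf : ∀ e, Differentiable ℂ (f e)) (hε : 0 < ε) (h : MemPWu E d dim r f) :
    MemPW E d dim (r + ε) f := by
  intro N
  obtain ⟨Cb, hCb⟩ := h.2 N
  refine ⟨4 ^ N * Cb, fun e => ?_⟩
  obtain ⟨Ca, hCa⟩ := h.1 e 0
  exact pow_mul_norm_le_of_bound_on_imaginary (hf e) (by linarith [hd e]) hε
    (fun ν => by simpa using hCa ν) (hCb e)

theorem MemPW.memPWu {E : Type*} {d : E → ℝ} {dim : E → ℕ} {r : ℝ}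
    {f : ∀ e : E, EuclideanSpace ℂ (Fin (dim e)) → ℂ} (hd : ∀ e, 0 ≤ d e)
    (h : MemPW E d dim r f) : MemPWu E d dim r f := by
  refine ⟨fun e N => ?_, fun N => ?_⟩
  · obtain ⟨C, hC⟩ := h N
    refine ⟨C, fun ν => le_trans ?_ (hC e ν)⟩
    gcongr
    linarith [hd e]
  · obtain ⟨C, hC⟩ := h N
    refine ⟨C, fun e ν hν => ?_⟩
    simpa [reNorm_eq_zero_iff.2 hν] using hC e ν

theorem paleyWiener_spaces_eq_general
    (E : Type*) (d : E → ℝ) (hd : ∀ e, 0 ≤ d e)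
    (dim : E → ℕ)
    (f : ∀ e : E, EuclideanSpace ℂ (Fin (dim e)) → ℂ)
    (hent : ∀ e, Differentiable ℂ (f e)) :
    (∀ r > (0 : ℝ), ∀ ε > (0 : ℝ), MemPWu E d dim r f → MemPW E d dim (r + ε) f) ∧
      ((∃ r > (0 : ℝ), MemPWu E d dim r f) ↔ (∃ r > (0 : ℝ), MemPW E d dim r f)) :=
  ⟨fun _ _ _ hε h => h.memPW hd hent hε,
    fun ⟨r, hr, h⟩ => ⟨r + r, by linarith, h.memPW hd hent hr⟩,
    fun ⟨r, hr, h⟩ => ⟨r, hr, h.memPWu hd⟩⟩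

/-- Comparison of Paley-Wiener spaces: for a family `(f_e)` of entire functions on spaces of
dimension bounded by `D`, one has `PW̲^r ⊆ PW^{r+ε}` for every `r, ε > 0`; consequently the
inductive limits `PW = ⋃_r PW^r` and `PW̲ = ⋃_r PW̲^r` coincide. -/
theorem paleyWiener_spaces_eq
    (E : Type*) (D : ℕ) (d : E → ℝ) (hd : ∀ e, 0 ≤ d e)
    (dim : E → ℕ) (hdim : ∀ e, dim e ≤ D)
    (f : ∀ e : E, EuclideanSpace ℂ (Fin (dim e)) → ℂ)
    (hent : ∀ e, Differentiable ℂ (f e)) :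
    (∀ r > (0 : ℝ), ∀ ε > (0 : ℝ), MemPWu E d dim r f → MemPW E d dim (r + ε) f) ∧
      ((∃ r > (0 : ℝ), MemPWu E d dim r f) ↔ (∃ r > (0 : ℝ), MemPW E d dim r f)) :=
  paleyWiener_spaces_eq_general E d hd dim f hent
end

section
/- Let A = ℂ[V] be a polynomial ring, W a finite group acting on A, and suppose A is a free A^W-module with basis (h_w)_{w∈W}, so every Q ∈ A has a unique decomposition Q = Σ_w h_w Q_w with Q_w ∈ A^W. Suppose there exist a nonzero D ∈ A and elements D_{w,w'} ∈ A such that D·Q_w = Σ_{w'} D_{w,w'}·(w'·Q) for all Q and w. Let μ be a W-stable finite set of ℂ-points at which D vanishes to order at most N-1. Then every Q vanishing to order ≥ N at all points of μ has all its components Q_w vanishing on μ. -/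
open scoped BigOperators

/-- The action of a linear automorphism `g` of `ℂⁿ` on polynomials: `(actPoly g Q)(x) = Q(g x)`
(substitution of the linear forms representing `g` into `Q`). -/
noncomputable def actPoly {n : ℕ} (g : (Fin n → ℂ) ≃ₗ[ℂ] (Fin n → ℂ))
    (Q : MvPolynomial (Fin n) ℂ) : MvPolynomial (Fin n) ℂ :=
  MvPolynomial.bind₁
    (fun i => ∑ j, MvPolynomial.C (g (Pi.single j 1) i) * MvPolynomial.X j) Q

lemma eval_actPoly {n : ℕ} (g : (Fin n → ℂ) ≃ₗ[ℂ] (Fin n → ℂ))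
    (Q : MvPolynomial (Fin n) ℂ) (y : Fin n → ℂ) :
    MvPolynomial.eval y (actPoly g Q) = MvPolynomial.eval (g y) Q := by
  have hy : g y = fun i => ∑ j, g (Pi.single j 1) i * y j := by
    have : y = ∑ j, y j • (Pi.single j 1 : Fin n → ℂ) := by
      funext i
      simp [Finset.sum_apply, Pi.single_apply, Finset.sum_ite_eq', mul_comm]
    conv_lhs => rw [this]
    funext i
    simp [Finset.sum_apply, mul_comm]
  unfold actPoly
  rw [MvPolynomial.hom_bind₁]
  rw [hy]
  have : MvPolynomial.eval (fun i => ∑ j, g (Pi.single j 1) i * y j)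
      = MvPolynomial.eval₂Hom (RingHom.id ℂ) (fun i => ∑ j, g (Pi.single j 1) i * y j) := rfl
  rw [this]
  apply MvPolynomial.eval₂Hom_congr
  · ext r
    simp
  · funext i
    simp

  rfl

lemma actPoly_mem_pow {n : ℕ} (g : (Fin n → ℂ) ≃ₗ[ℂ] (Fin n → ℂ))
    (Q : MvPolynomial (Fin n) ℂ) (y : Fin n → ℂ) (N : ℕ)
    (hQ : Q ∈ (RingHom.ker (MvPolynomial.eval (g y))) ^ N) :
    actPoly g Q ∈ (RingHom.ker (MvPolynomial.eval y)) ^ N := by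
  set φ : MvPolynomial (Fin n) ℂ →+* MvPolynomial (Fin n) ℂ :=
    (MvPolynomial.bind₁
      (fun i => ∑ j, MvPolynomial.C (g (Pi.single j 1) i) * MvPolynomial.X j)).toRingHom
  have hφ : ∀ P, φ P = actPoly g P := fun P => rfl
  have hker : Ideal.map φ (RingHom.ker (MvPolynomial.eval (g y)))
      ≤ RingHom.ker (MvPolynomial.eval y) := by
    rw [Ideal.map_le_iff_le_comap]
    intro P hP
    simp only [Ideal.mem_comap, RingHom.mem_ker, hφ, eval_actPoly]
    exact hP
  have : actPoly g Q ∈ Ideal.map φ ((RingHom.ker (MvPolynomial.eval (g y))) ^ N) :=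
    Ideal.mem_map_of_mem φ hQ
  rw [Ideal.map_pow] at this
  exact Ideal.pow_right_mono hker N this

/-- Setting of the proof of Lemma 2.5(1): `A = ℂ[V]` is a free module over the invariants
`A^W` with basis `(h_w)`, so every `Q` decomposes as `Q = Σ_w h_w Q_w` with invariant
components `Q_w`, and there are `D ≠ 0` and polynomials `D_{w,w'}` with
`D·Q_w = Σ_{w'} D_{w,w'}·(w'·Q)`. If `μ` is a `W`-stable finite set of points at which `D`
vanishes to order at most `N-1`, then every `Q` vanishing to order `≥ N` at all points of
`μ` has all its components `Q_w` vanishing on `μ`. Here "`Q` vanishes to order `≥ N` at `y`"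
is expressed as membership in the `N`-th power of the maximal ideal at `y`. -/
theorem components_vanish_of_high_order_vanishing
    (n : ℕ) (W : Type*) [Group W] [Fintype W]
    (ρ : W →* ((Fin n → ℂ) ≃ₗ[ℂ] (Fin n → ℂ)))
    (h : W → MvPolynomial (Fin n) ℂ)
    (comp : MvPolynomial (Fin n) ℂ → W → MvPolynomial (Fin n) ℂ)
    (hdecomp : ∀ Q : MvPolynomial (Fin n) ℂ, Q = ∑ w : W, h w * comp Q w)
    (hcomp_inv : ∀ Q : MvPolynomial (Fin n) ℂ, ∀ w w' : W,
      actPoly (ρ w') (comp Q w) = comp Q w)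
    (D : MvPolynomial (Fin n) ℂ) (hD : D ≠ 0)
    (Dm : W → W → MvPolynomial (Fin n) ℂ)
    (hrel : ∀ (Q : MvPolynomial (Fin n) ℂ) (w : W),
      D * comp Q w = ∑ w' : W, Dm w w' * actPoly (ρ w') Q)
    (μ : Finset (Fin n → ℂ)) (hstab : ∀ w : W, ∀ y ∈ μ, ρ w y ∈ μ)
    (N : ℕ)
    (hDord : ∀ y ∈ μ, D ∉ (RingHom.ker (MvPolynomial.eval y)) ^ N) :
    ∀ Q : MvPolynomial (Fin n) ℂ,
      (∀ y ∈ μ, Q ∈ (RingHom.ker (MvPolynomial.eval y)) ^ N) →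
      ∀ w : W, ∀ y ∈ μ, MvPolynomial.eval y (comp Q w) = 0 := by
  intro Q hQ w y hy
  set m : Ideal (MvPolynomial (Fin n) ℂ) := RingHom.ker (MvPolynomial.eval y) with hm
  rcases Nat.eq_zero_or_pos N with h0 | hN
  · exact absurd (by simp [h0]) (hDord y hy)
  have hmax : m.IsMaximal :=
    RingHom.ker_isMaximal_of_surjective (MvPolynomial.eval y)
      (fun c => ⟨MvPolynomial.C c, MvPolynomial.eval_C _⟩)
  have hmem : D * comp Q w ∈ m ^ N := by
    rw [hrel]
    apply Ideal.sum_mem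
    intro w' _
    apply Ideal.mul_mem_left
    exact actPoly_mem_pow (ρ w') Q y N (hQ (ρ w' y) (hstab w' y hy))
  have hrad : (m ^ N).radical = m := by
    rw [Ideal.radical_pow m hN.ne', hmax.isPrime.radical]
  have hprimary : (m ^ N).IsPrimary :=
    Ideal.isPrimary_of_isMaximal_radical (by rw [hrad]; exact hmax)
  rcases (Ideal.isPrimary_iff.mp hprimary).2 hmem with hd | hc
  · exact absurd hd (hDord y hy)
  · rw [hrad] at hc
    exact hc
end
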